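/- arXiv:2011.12257 — 5 statements merged into one kernel-verified Lean document; each statement's English description precedes it below -/
import Mathlib

section
/- Let P := {x ∈ ℝⁿ | ∃ y ∈ ℝᵖ, Ax + By ≤ c}, let e_1,…,e_k ∈ P be linearly independent, and suppose the system: e_i^T x = 0 for i=1,…,k; x = x⁺ − x⁻; Ax⁺ + By⁺ ≤ λ⁺ c; Ax⁻ + By⁻ ≤ λ⁻ c; λ⁺ ≥ 0; λ⁻ ≥ 0 has a solution with x ≠ 0. Then the span of P has dimension at least k+1. -/
/-!
Every solution `(u, w, l)` of the homogenized system `A u + B w ≤ l • c`, `l ≥ 0`, has `u` in the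
span of `P`: for `l > 0` the point `l⁻¹ • u` lies in `P`, and for `l = 0` the vector `u` is a
recession direction, so `x₀ + u ∈ P` for any `x₀ ∈ P`. Hence `x = x⁺ - x⁻` lies in the span of `P`.
Being nonzero and orthogonal to every `e i`, it is not in their span, so `x, e 1, …, e k` are
`k + 1` linearly independent vectors of that span.
-/

open Matrix

section LinearAlgebra

variable {K V : Type*} [DivisionRing K] [AddCommGroup V] [Module K V]

theorem Submodule.card_add_one_le_finrank_of_notMem_span [FiniteDimensional K V]
    {S : Submodule K V} {k : ℕ} {e : Fin k → V} (he : LinearIndependent K e)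
    (heS : ∀ i, e i ∈ S) {x : V} (hxS : x ∈ S) (hx : x ∉ Submodule.span K (Set.range e)) :
    k + 1 ≤ Module.finrank K S := by
  have hind : LinearIndependent K (Fin.cons x e : Fin (k + 1) → V) :=
    linearIndependent_finCons.2 ⟨he, hx⟩
  have hle : Submodule.span K (Set.range (Fin.cons x e : Fin (k + 1) → V)) ≤ S := by
    rw [Submodule.span_le, Set.range_subset_iff]
    exact Fin.cases hxS heS
  simpa [finrank_span_eq_card hind] using Submodule.finrank_mono hle

end LinearAlgebra

theorem notMem_span_of_dotProduct_eq_zero {ι R : Type*} [Fintype ι] [Field R] [LinearOrder R]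
    [IsStrictOrderedRing R] {k : ℕ} {e : Fin k → ι → R} {x : ι → R} (hx : x ≠ 0)
    (horth : ∀ i, e i ⬝ᵥ x = 0) : x ∉ Submodule.span R (Set.range e) := by
  rw [Submodule.mem_span_range_iff_exists_fun]
  rintro ⟨a, rfl⟩
  refine hx (dotProduct_self_eq_zero.1 ?_)
  simp only [sum_dotProduct, smul_dotProduct, horth, smul_zero, Finset.sum_const_zero]

section ProjectedPolyhedron

variable {ι κ μ R : Type*} [Fintype κ] [Fintype μ] [Field R] [LinearOrder R]
  [IsStrictOrderedRing R] {A : Matrix ι κ R} {B : Matrix ι μ R} {c : ι → R}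

theorem add_mem_of_mulVec_add_mulVec_nonpos {x₀ u : κ → R} {y₀ w : μ → R}
    (h₀ : A *ᵥ x₀ + B *ᵥ y₀ ≤ c) (h : A *ᵥ u + B *ᵥ w ≤ 0) :
    x₀ + u ∈ {x | ∃ y, A *ᵥ x + B *ᵥ y ≤ c} := by
  refine ⟨y₀ + w, ?_⟩
  calc A *ᵥ (x₀ + u) + B *ᵥ (y₀ + w) = (A *ᵥ x₀ + B *ᵥ y₀) + (A *ᵥ u + B *ᵥ w) := by
        simp only [mulVec_add]; abel
    _ ≤ c + 0 := add_le_add h₀ h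
    _ = c := add_zero c

theorem inv_smul_mem_of_mulVec_add_mulVec_le_smul {u : κ → R} {w : μ → R} {l : R} (hl : 0 < l)
    (h : A *ᵥ u + B *ᵥ w ≤ l • c) :
    l⁻¹ • u ∈ {x | ∃ y, A *ᵥ x + B *ᵥ y ≤ c} := by
  refine ⟨l⁻¹ • w, ?_⟩
  calc A *ᵥ (l⁻¹ • u) + B *ᵥ (l⁻¹ • w) = l⁻¹ • (A *ᵥ u + B *ᵥ w) := by
        rw [mulVec_smul, mulVec_smul, smul_add]
    _ ≤ l⁻¹ • (l • c) := smul_le_smul_of_nonneg_left h (inv_nonneg.2 hl.le)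
    _ = c := inv_smul_smul₀ hl.ne' c

theorem mem_span_of_mulVec_add_mulVec_le_smul {x₀ : κ → R}
    (hx₀ : x₀ ∈ {x | ∃ y, A *ᵥ x + B *ᵥ y ≤ c}) {u : κ → R} {w : μ → R} {l : R} (hl : 0 ≤ l)
    (h : A *ᵥ u + B *ᵥ w ≤ l • c) :
    u ∈ Submodule.span R {x | ∃ y, A *ᵥ x + B *ᵥ y ≤ c} := by
  rcases hl.eq_or_lt with rfl | hl
  · obtain ⟨y₀, hy₀⟩ := hx₀
    rw [zero_smul] at h
    have hmem := add_mem_of_mulVec_add_mulVec_nonpos hy₀ h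
    simpa using Submodule.sub_mem _ (Submodule.subset_span hmem) (Submodule.subset_span ⟨y₀, hy₀⟩)
  · have hmem := inv_smul_mem_of_mulVec_add_mulVec_le_smul hl h
    simpa [smul_smul, hl.ne'] using Submodule.smul_mem _ l (Submodule.subset_span hmem)

end ProjectedPolyhedron

theorem span_dim_ge_of_feasible_system (n p m k : ℕ)
    (A : Matrix (Fin m) (Fin n) ℝ) (B : Matrix (Fin m) (Fin p) ℝ) (c : Fin m → ℝ)
    (P : Set (Fin n → ℝ))
    (hP : P = {x | ∃ y : Fin p → ℝ, A.mulVec x + B.mulVec y ≤ c})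
    (hPne : P.Nonempty)
    (e : Fin k → (Fin n → ℝ)) (heP : ∀ i, e i ∈ P) (hind : LinearIndependent ℝ e)
    (hsol : ∃ (x xp xm : Fin n → ℝ) (yp ym : Fin p → ℝ) (lp lm : ℝ),
      x ≠ 0 ∧ (∀ i, dotProduct (e i) x = 0) ∧ x = xp - xm ∧
      A.mulVec xp + B.mulVec yp ≤ lp • c ∧
      A.mulVec xm + B.mulVec ym ≤ lm • c ∧ 0 ≤ lp ∧ 0 ≤ lm) :
    k + 1 ≤ Module.finrank ℝ (Submodule.span ℝ P) := by
  obtain ⟨x, xp, xm, yp, ym, lp, lm, hx, horth, rfl, hp, hm, hlp, hlm⟩ := hsol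
  obtain ⟨x₀, hx₀⟩ := hPne
  subst hP
  have hxS : xp - xm ∈ Submodule.span ℝ {x | ∃ y, A *ᵥ x + B *ᵥ y ≤ c} :=
    Submodule.sub_mem _ (mem_span_of_mulVec_add_mulVec_le_smul hx₀ hlp hp)
      (mem_span_of_mulVec_add_mulVec_le_smul hx₀ hlm hm)
  exact Submodule.card_add_one_le_finrank_of_notMem_span hind
    (fun i => Submodule.subset_span (heP i)) hxS (notMem_span_of_dotProduct_eq_zero hx horth)
end

section
/- Let P := {x ∈ ℝⁿ | ∃ y ∈ ℝᵖ, Ax + By ≤ c}, let e_1,…,e_k ∈ P be linearly independent, and suppose span(P) has dimension at least k+1. Then there exist x ≠ 0, x⁺, x⁻ ∈ ℝⁿ, y⁺, y⁻ ∈ ℝᵖ, and scalars λ⁺, λ⁻ ≥ 0 such that e_i^T x = 0 for all i = 1,…,k, x = x⁺ − x⁻, Ax⁺ + By⁺ ≤ λ⁺ c, and Ax⁻ + By⁻ ≤ λ⁻ c. -/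
/-!
The points `x` for which some `y` and `λ ≥ 0` satisfy `A x + B y ≤ λ c` form a convex cone
containing `P`, and the linear span of a convex cone is the set of differences of its elements.
Every vector of `span P` therefore splits as `x⁺ - x⁻` as required, and it remains to pick a nonzero
one orthogonal to `e₁, …, e_k`: it exists since these `k` conditions cut `span P`, of dimension
`> k`, down to a nonzero subspace.
-/

open Module

namespace PointedCone

variable {R E : Type*} [Ring R] [LinearOrder R] [IsOrderedRing R] [AddCommGroup E] [Module R E]

theorem exists_sub_of_mem_span (C : PointedCone R E) {x : E}
    (hx : x ∈ Submodule.span R (C : Set E)) : ∃ a ∈ C, ∃ b ∈ C, a - b = x := by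
  induction hx using Submodule.span_induction with
  | mem x hx => exact ⟨x, hx, 0, C.zero_mem, sub_zero x⟩
  | zero => exact ⟨0, C.zero_mem, 0, C.zero_mem, sub_zero 0⟩
  | add x y _ _ hx hy =>
    obtain ⟨a, ha, b, hb, rfl⟩ := hx
    obtain ⟨a', ha', b', hb', rfl⟩ := hy
    exact ⟨a + a', C.add_mem ha ha', b + b', C.add_mem hb hb', add_sub_add_comm a a' b b'⟩
  | smul r x _ hx =>
    obtain ⟨a, ha, b, hb, rfl⟩ := hx
    rcases le_total 0 r with hr | hr
    · exact ⟨r • a, C.smul_mem hr ha, r • b, C.smul_mem hr hb, (smul_sub r a b).symm⟩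
    · refine ⟨(-r) • b, C.smul_mem (neg_nonneg.mpr hr) hb,
        (-r) • a, C.smul_mem (neg_nonneg.mpr hr) ha, ?_⟩
      rw [neg_smul, neg_smul, neg_sub_neg, smul_sub]

end PointedCone

namespace Matrix

variable {R m n p : Type*} [Field R] [LinearOrder R] [IsStrictOrderedRing R]
  [Fintype n] [Fintype p]

def homogenizationCone (A : Matrix m n R) (B : Matrix m p R) (c : m → R) :
    PointedCone R (n → R) where
  carrier := {x | ∃ y, ∃ l : R, 0 ≤ l ∧ A *ᵥ x + B *ᵥ y ≤ l • c}
  zero_mem' := ⟨0, 0, le_rfl, by simp⟩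
  add_mem' := by
    rintro x x' ⟨y, l, hl, h⟩ ⟨y', l', hl', h'⟩
    refine ⟨y + y', l + l', add_nonneg hl hl', ?_⟩
    simpa only [mulVec_add, add_smul, add_add_add_comm] using add_le_add h h'
  smul_mem' := by
    rintro ⟨r, hr⟩ x ⟨y, l, hl, h⟩
    refine ⟨r • y, r * l, mul_nonneg hr hl, ?_⟩
    simpa only [Nonneg.mk_smul, mulVec_smul, ← smul_add, mul_smul]
      using smul_le_smul_of_nonneg_left h hr

theorem subset_homogenizationCone (A : Matrix m n R) (B : Matrix m p R) (c : m → R) :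
    {x | ∃ y, A *ᵥ x + B *ᵥ y ≤ c} ⊆ homogenizationCone A B c :=
  fun _ ⟨y, hy⟩ => ⟨y, 1, zero_le_one, by rwa [one_smul]⟩

end Matrix

theorem Submodule.exists_ne_zero_forall_dotProduct_eq_zero {K ι n : Type*} [Field K]
    [Fintype ι] [Fintype n] (W : Submodule K (n → K)) (e : ι → n → K)
    (h : Fintype.card ι < finrank K W) : ∃ x ∈ W, x ≠ 0 ∧ ∀ i, e i ⬝ᵥ x = 0 := by
  have hker : LinearMap.ker ((Matrix.of e).mulVecLin ∘ₗ W.subtype) ≠ ⊥ :=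
    LinearMap.ker_ne_bot_of_finrank_lt (by rwa [finrank_fintype_fun_eq_card])
  obtain ⟨⟨x, hxW⟩, hx, hx0⟩ := Submodule.exists_mem_ne_zero_of_ne_bot hker
  exact ⟨x, hxW, fun h => hx0 (Subtype.ext h), congrFun hx⟩

theorem feasible_system_of_span_dim_ge_general (n p m k : ℕ)
    (A : Matrix (Fin m) (Fin n) ℝ) (B : Matrix (Fin m) (Fin p) ℝ) (c : Fin m → ℝ)
    (P : Set (Fin n → ℝ))
    (hP : P = {x | ∃ y : Fin p → ℝ, A.mulVec x + B.mulVec y ≤ c})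
    (e : Fin k → (Fin n → ℝ))
    (hdim : k + 1 ≤ Module.finrank ℝ (Submodule.span ℝ P)) :
    ∃ (x xp xm : Fin n → ℝ) (yp ym : Fin p → ℝ) (lp lm : ℝ),
      x ≠ 0 ∧ 0 ≤ lp ∧ 0 ≤ lm ∧ (∀ i, dotProduct (e i) x = 0) ∧ x = xp - xm ∧
      A.mulVec xp + B.mulVec yp ≤ lp • c ∧
      A.mulVec xm + B.mulVec ym ≤ lm • c := by
  obtain ⟨x, hxP, hx0, horth⟩ :=
    (Submodule.span ℝ P).exists_ne_zero_forall_dotProduct_eq_zero e (by simpa using hdim)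
  have hx : x ∈ Submodule.span ℝ (Matrix.homogenizationCone A B c : Set (Fin n → ℝ)) :=
    Submodule.span_mono (hP ▸ Matrix.subset_homogenizationCone A B c) hxP
  obtain ⟨xp, ⟨yp, lp, hlp, hp⟩, xm, ⟨ym, lm, hlm, hm⟩, rfl⟩ :=
    (Matrix.homogenizationCone A B c).exists_sub_of_mem_span hx
  exact ⟨_, xp, xm, yp, ym, lp, lm, hx0, hlp, hlm, horth, rfl, hp, hm⟩

theorem feasible_system_of_span_dim_ge (n p m k : ℕ)
    (A : Matrix (Fin m) (Fin n) ℝ) (B : Matrix (Fin m) (Fin p) ℝ) (c : Fin m → ℝ)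
    (P : Set (Fin n → ℝ))
    (hP : P = {x | ∃ y : Fin p → ℝ, A.mulVec x + B.mulVec y ≤ c})
    (e : Fin k → (Fin n → ℝ)) (heP : ∀ i, e i ∈ P) (hind : LinearIndependent ℝ e)
    (hdim : k + 1 ≤ Module.finrank ℝ (Submodule.span ℝ P)) :
    ∃ (x xp xm : Fin n → ℝ) (yp ym : Fin p → ℝ) (lp lm : ℝ),
      x ≠ 0 ∧ 0 ≤ lp ∧ 0 ≤ lm ∧ (∀ i, dotProduct (e i) x = 0) ∧ x = xp - xm ∧
      A.mulVec xp + B.mulVec yp ≤ lp • c ∧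
      A.mulVec xm + B.mulVec ym ≤ lm • c :=
  feasible_system_of_span_dim_ge_general n p m k A B c P hP e hdim
end

section
/- Let S ⊆ ℝⁿ, and let x, x₁, …, x_m ∈ S with x ∉ {x₁,…,x_m}. Let U_A ⊆ ℝ^{n×n} and U_g := {g : ℝⁿ → ℝⁿ | ‖g(z)‖_∞ ≤ γ‖z‖_p^d for all z ∈ S}, and fix y₁,…,y_m ∈ ℝⁿ and h ∈ ℝⁿ. Then sup over pairs (A,g) ∈ U_A × U_g with Ax_k + g(x_k) = y_k for all k, of h^T(Ax + g(x)), equals [sup over such pairs of h^T A x] + [sup over such pairs of h^T g(x)], provided both suprema on the right are attained. -/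
/-!
The constraints on `(A, g)` couple `A` and `g` only at the interpolation points `xs k`, and the
growth bound on `g` is pointwise. Since `x` is not an interpolation point, the value of a
maximiser `g₂` of `hᵀ g(x)` at `x` can be grafted onto a maximiser `(A₁, g₁)` of `hᵀ A x`
without leaving the feasible set, and the grafted pair attains both suprema at once.
-/

theorem isGreatest_image_add_of_splice {α : Type*} {F : Set α} {f g : α → ℝ} {s₁ s₂ : ℝ}
    (hf : IsGreatest (f '' F) s₁) (hg : IsGreatest (g '' F) s₂)
    (hsplice : ∀ a ∈ F, ∀ b ∈ F, ∃ c ∈ F, f c = f a ∧ g c = g b) :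
    IsGreatest ((fun c => f c + g c) '' F) (s₁ + s₂) := by
  obtain ⟨⟨a, ha, rfl⟩, hf_le⟩ := hf
  obtain ⟨⟨b, hb, rfl⟩, hg_le⟩ := hg
  refine ⟨?_, ?_⟩
  · obtain ⟨c, hc, hfc, hgc⟩ := hsplice a ha b hb
    exact ⟨c, hc, congrArg₂ (· + ·) hfc hgc⟩
  · rintro _ ⟨c, hc, rfl⟩
    exact add_le_add (hf_le ⟨c, hc, rfl⟩) (hg_le ⟨c, hc, rfl⟩)

theorem forall_update_apply_of_forall {α β : Type*} [DecidableEq α] {P : α → β → Prop}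
    {S : Set α} {g g' : α → β} (hg : ∀ z ∈ S, P z (g z)) (hg' : ∀ z ∈ S, P z (g' z)) (x : α) :
    ∀ z ∈ S, P z (Function.update g x (g' x) z) := by
  intro z hz
  rcases eq_or_ne z x with rfl | hzx
  · simpa using hg' z hz
  · simpa [Function.update_of_ne hzx] using hg z hz

theorem inner_sup_splits_general (n m : ℕ) (S : Set (Fin n → ℝ))
    (x : Fin n → ℝ) (xs : Fin m → (Fin n → ℝ))
    (hxne : ∀ k, x ≠ xs k)
    (UA : Set (Matrix (Fin n) (Fin n) ℝ))
    (γ : ℝ) (p : ℝ) (d : ℕ)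
    (ys : Fin m → (Fin n → ℝ)) (h : Fin n → ℝ)
    (Feasible : Set (Matrix (Fin n) (Fin n) ℝ × ((Fin n → ℝ) → (Fin n → ℝ))))
    (hFeas : Feasible = {Ag | Ag.1 ∈ UA ∧
      (∀ z ∈ S, ∀ i, |Ag.2 z i| ≤ γ * ((∑ j, |z j| ^ p) ^ (1 / p)) ^ d) ∧
      ∀ k, Ag.1.mulVec (xs k) + Ag.2 (xs k) = ys k})
    (s₁ s₂ : ℝ)
    (h₁ : IsGreatest ((fun Ag => dotProduct h (Ag.1.mulVec x)) '' Feasible) s₁)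
    (h₂ : IsGreatest ((fun Ag => dotProduct h (Ag.2 x)) '' Feasible) s₂) :
    sSup ((fun Ag => dotProduct h (Ag.1.mulVec x + Ag.2 x)) '' Feasible)
      = s₁ + s₂ := by
  simp only [dotProduct_add]
  refine (isGreatest_image_add_of_splice h₁ h₂ ?_).csSup_eq
  subst hFeas
  rintro ⟨A₁, g₁⟩ ⟨hA₁, hg₁, hinterp₁⟩ ⟨A₂, g₂⟩ ⟨-, hg₂, -⟩
  dsimp only at hg₁ hg₂
  have hgrowth := forall_update_apply_of_forall (S := S) (g := g₁) (g' := g₂)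
    (P := fun z (v : Fin n → ℝ) => ∀ i, |v i| ≤ γ * ((∑ j, |z j| ^ p) ^ (1 / p)) ^ d)
  specialize hgrowth hg₁ hg₂ x
  refine ⟨(A₁, Function.update g₁ x (g₂ x)), ⟨hA₁, hgrowth, fun k => ?_⟩, ?_⟩
  · dsimp only
    rw [Function.update_of_ne (hxne k).symm]
    exact hinterp₁ k
  · dsimp only
    rw [Function.update_self]
    exact ⟨rfl, rfl⟩

theorem inner_sup_splits (n m : ℕ) (S : Set (Fin n → ℝ))
    (x : Fin n → ℝ) (xs : Fin m → (Fin n → ℝ))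
    (hxS : x ∈ S) (hxsS : ∀ k, xs k ∈ S) (hxne : ∀ k, x ≠ xs k)
    (UA : Set (Matrix (Fin n) (Fin n) ℝ))
    (γ : ℝ) (hγ : 0 < γ) (p : ℝ) (hp : 1 ≤ p) (d : ℕ)
    (ys : Fin m → (Fin n → ℝ)) (h : Fin n → ℝ)
    (Feasible : Set (Matrix (Fin n) (Fin n) ℝ × ((Fin n → ℝ) → (Fin n → ℝ))))
    (hFeas : Feasible = {Ag | Ag.1 ∈ UA ∧
      (∀ z ∈ S, ∀ i, |Ag.2 z i| ≤ γ * ((∑ j, |z j| ^ p) ^ (1 / p)) ^ d) ∧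
      ∀ k, Ag.1.mulVec (xs k) + Ag.2 (xs k) = ys k})
    (s₁ s₂ : ℝ)
    (h₁ : IsGreatest ((fun Ag => dotProduct h (Ag.1.mulVec x)) '' Feasible) s₁)
    (h₂ : IsGreatest ((fun Ag => dotProduct h (Ag.2 x)) '' Feasible) s₂) :
    sSup ((fun Ag => dotProduct h (Ag.1.mulVec x + Ag.2 x)) '' Feasible)
      = s₁ + s₂ :=
  inner_sup_splits_general n m S x xs hxne UA γ p d ys h Feasible hFeas s₁ s₂ h₁ h₂
end

section
/- S-lemma: Let q_a, q_b : ℝⁿ → ℝ be quadratic functions (polynomials of degree at most 2) and suppose there exists x̄ with q_a(x̄) < 0. Then the implication [for all x, q_a(x) ≤ 0 ⟹ q_b(x) ≤ 0] holds if and only if there exists λ ≥ 0 such that λ q_a(x) − q_b(x) ≥ 0 for all x ∈ ℝⁿ. -/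
/-!
Homogenize: `q(x)` becomes the quadratic form `Q(x, t) = xᵀPx + 2t bᵀx + ct²` on `ℝⁿ × ℝ`, and the
implication `qa ≤ 0 → qb ≤ 0` passes to `Qa < 0 → Qb ≤ 0` (on `t = 0` by continuity). For quadratic
forms `A`, `B` with `A < 0 → B ≤ 0` and `A` somewhere negative, every ratio `B x / A x` with
`A x > 0` is at most every ratio `B y / A y` with `A y < 0`; any `l ≥ 0` between the two families
gives `B ≤ l A`.
-/

open Filter Topology

theorem exists_quadratic_eq_zero_of_neg_of_pos {a c : ℝ} (b : ℝ) (ha : a < 0) (hc : 0 < c) :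
    ∃ s₁ s₂ : ℝ, s₁ < 0 ∧ 0 < s₂ ∧ a * s₁ ^ 2 + b * s₁ + c = 0 ∧ a * s₂ ^ 2 + b * s₂ + c = 0 := by
  set r := √(b ^ 2 - 4 * a * c)
  have hr : r ^ 2 = b ^ 2 - 4 * a * c := Real.sq_sqrt (by nlinarith)
  have hbr : |b| < r := abs_lt_of_sq_lt_sq (by nlinarith) (Real.sqrt_nonneg _)
  have ha' : a ≠ 0 := ha.ne
  refine ⟨(-b + r) / (2 * a), (-b - r) / (2 * a), div_neg_of_pos_of_neg ?_ ?_,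
    div_pos_of_neg_of_neg ?_ ?_, ?_, ?_⟩
  · linarith [le_abs_self b]
  · linarith
  · linarith [neg_abs_le b]
  · linarith
  · field_simp
    linear_combination hr
  · field_simp
    linear_combination hr

namespace QuadraticMap

variable {V : Type*} [AddCommGroup V] [Module ℝ V]

theorem map_add_smul (Q : QuadraticMap ℝ V ℝ) (x y : V) (s : ℝ) :
    Q (x + s • y) = Q x + s * polar Q x y + s ^ 2 * Q y := by
  rw [QuadraticMap.map_add Q, QuadraticMap.map_smul, polar_smul_right, smul_eq_mul, smul_eq_mul]
  ring

theorem tendsto_map_add_smul (Q : QuadraticMap ℝ V ℝ) (x y : V) :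
    Tendsto (fun s : ℝ => Q (x + s • y)) (𝓝 0) (𝓝 (Q x)) := by
  simp_rw [map_add_smul]
  have : Continuous fun s : ℝ => Q x + s * polar Q x y + s ^ 2 * Q y := by fun_prop
  simpa using this.tendsto 0

theorem nonpos_of_eventually_nonpos (Q : QuadraticMap ℝ V ℝ) {x : V} (y : V)
    (h : ∀ᶠ s in 𝓝[>] (0 : ℝ), Q (x + s • y) ≤ 0) : Q x ≤ 0 :=
  le_of_tendsto ((Q.tendsto_map_add_smul x y).mono_left nhdsWithin_le_nhds) h

variable {A B : QuadraticMap ℝ V ℝ}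

theorem nonpos_of_nonpos_of_neg_imp_nonpos (hA : ∃ y, A y < 0)
    (hAB : ∀ z, A z < 0 → B z ≤ 0) {z : V} (hz : A z ≤ 0) : B z ≤ 0 := by
  obtain ⟨y, hy, hpolar⟩ : ∃ y, A y < 0 ∧ polar A z y ≤ 0 := by
    obtain ⟨y, hy⟩ := hA
    rcases le_total (polar A z y) 0 with h | h
    · exact ⟨y, hy, h⟩
    · exact ⟨-y, by rwa [QuadraticMap.map_neg], by rw [polar_neg_right]; linarith⟩
  refine B.nonpos_of_eventually_nonpos y
    (eventually_nhdsWithin_of_forall fun s (hs : (0 : ℝ) < s) => hAB _ ?_)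
  rw [map_add_smul]
  nlinarith [mul_nonpos_of_nonneg_of_nonpos hs.le hpolar, mul_neg_of_pos_of_neg (pow_pos hs 2) hy]

theorem div_le_div_of_pos_of_neg (hAB : ∀ z, A z < 0 → B z ≤ 0) {x y : V} (hx : 0 < A x)
    (hy : A y < 0) : B x / A x ≤ B y / A y := by
  obtain ⟨s₁, s₂, hs₁, hs₂, hroot₁, hroot₂⟩ :=
    exists_quadratic_eq_zero_of_neg_of_pos (polar A x y) hy hx
  have hB : ∀ s, A (x + s • y) = 0 → 0 ≤ A y * (B x + s * polar B x y + s ^ 2 * B y) := by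
    intro s hs
    rw [← map_add_smul]
    exact mul_nonneg_of_nonpos_of_nonpos hy.le
      (nonpos_of_nonpos_of_neg_imp_nonpos ⟨y, hy⟩ hAB hs.le)
  -- `A y • B - B y • A` is affine along `x + s y`, and nonnegative at the roots `s₁ < 0 < s₂` of `A`
  -- on that line.
  have h₁ := hB s₁ (by rw [map_add_smul]; linarith)
  have h₂ := hB s₂ (by rw [map_add_smul]; linarith)
  have e₁ : 0 ≤ (B x * A y - B y * A x) + s₁ * (A y * polar B x y - B y * polar A x y) := by
    linear_combination h₁ + B y * hroot₁
  have e₂ : 0 ≤ (B x * A y - B y * A x) + s₂ * (A y * polar B x y - B y * polar A x y) := by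
    linear_combination h₂ + B y * hroot₂
  rw [div_le_iff₀ hx, div_mul_eq_mul_div, le_div_iff_of_neg hy]
  nlinarith [mul_nonneg hs₂.le e₁, mul_nonneg (neg_nonneg.2 hs₁.le) e₂]

theorem exists_nonneg_le_mul_of_neg_imp_nonpos (hA : ∃ y, A y < 0)
    (hAB : ∀ z, A z < 0 → B z ≤ 0) : ∃ l : ℝ, 0 ≤ l ∧ ∀ z, B z ≤ l * A z := by
  set S := (fun x => B x / A x) '' {x | 0 < A x}
  have hS : ∀ y, A y < 0 → ∀ r ∈ S, r ≤ B y / A y := by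
    rintro y hy _ ⟨x, hx, rfl⟩
    exact div_le_div_of_pos_of_neg hAB hx hy
  refine ⟨max 0 (sSup S), le_max_left _ _, fun z => ?_⟩
  rcases lt_trichotomy (A z) 0 with hz | hz | hz
  · have hBz : 0 ≤ B z / A z := div_nonneg_of_nonpos (hAB z hz) hz.le
    have : max 0 (sSup S) ≤ B z / A z := max_le hBz (Real.sSup_le (hS z hz) hBz)
    rwa [le_div_iff_of_neg hz] at this
  · rw [hz, mul_zero]
    exact nonpos_of_nonpos_of_neg_imp_nonpos hA hAB hz.le
  · obtain ⟨y, hy⟩ := hA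
    have : B z / A z ≤ max 0 (sSup S) :=
      (le_csSup ⟨_, hS y hy⟩ ⟨z, hz, rfl⟩).trans (le_max_right _ _)
    rwa [div_le_iff₀ hz] at this

theorem nonpos_of_neg_of_forall_mk_one {A B : QuadraticMap ℝ (V × ℝ) ℝ}
    (h : ∀ x, A (x, 1) < 0 → B (x, 1) ≤ 0) {z : V × ℝ} (hz : A z < 0) : B z ≤ 0 := by
  have off_axis : ∀ x t, t ≠ 0 → A (x, t) < 0 → B (x, t) ≤ 0 := by
    intro x t ht hxt
    have hscale : ((x, t) : V × ℝ) = t • (t⁻¹ • x, 1) := by simp [smul_smul, ht]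
    rw [hscale, QuadraticMap.map_smul, smul_eq_mul] at hxt ⊢
    exact mul_nonpos_of_nonneg_of_nonpos (mul_self_nonneg t)
      (h _ (neg_of_mul_neg_right hxt (mul_self_nonneg t)))
  obtain ⟨x, t⟩ := z
  rcases ne_or_eq t 0 with ht | rfl
  · exact off_axis x t ht hz
  · refine B.nonpos_of_eventually_nonpos ((0 : V), (1 : ℝ)) ?_
    have hnear := (A.tendsto_map_add_smul (x, 0) (0, 1)).eventually (gt_mem_nhds hz)
    filter_upwards [nhdsWithin_le_nhds hnear, self_mem_nhdsWithin] with s hs (hs0 : 0 < s)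
    have hxs : ((x, 0) + s • (0, 1) : V × ℝ) = (x, s) := by simp
    rw [hxs] at hs ⊢
    exact off_axis x s hs0.ne' hs

end QuadraticMap

namespace Matrix

variable {R ι : Type*} [CommRing R] [Fintype ι]

def homogenization (P : Matrix ι ι R) (b : ι → R) (c : R) : QuadraticMap R ((ι → R) × R) R :=
  LinearMap.BilinMap.toQuadraticMap <| LinearMap.mk₂ R
    (fun z w => z.1 ⬝ᵥ P *ᵥ w.1 + 2 * z.2 * (b ⬝ᵥ w.1) + c * z.2 * w.2)
    (fun _ _ _ => by simp only [Prod.fst_add, Prod.snd_add, add_dotProduct]; ring)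
    (fun _ _ _ => by simp only [Prod.smul_fst, Prod.smul_snd, smul_dotProduct, smul_eq_mul]; ring)
    (fun _ _ _ => by simp only [Prod.fst_add, Prod.snd_add, mulVec_add, dotProduct_add]; ring)
    (fun _ _ _ => by
      simp only [Prod.smul_fst, Prod.smul_snd, mulVec_smul, dotProduct_smul, smul_eq_mul]; ring)

theorem homogenization_apply_mk_one (P : Matrix ι ι R) (b : ι → R) (c : R) (x : ι → R) :
    homogenization P b c (x, 1) = x ⬝ᵥ P *ᵥ x + 2 * (b ⬝ᵥ x) + c := by
  simp [homogenization]

end Matrix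

theorem s_lemma_general (n : ℕ)
    (Pa Pb : Matrix (Fin n) (Fin n) ℝ)
    (ba bb : Fin n → ℝ) (ca cb : ℝ)
    (qa qb : (Fin n → ℝ) → ℝ)
    (hqa : ∀ x, qa x = dotProduct x (Pa.mulVec x) + 2 * dotProduct ba x + ca)
    (hqb : ∀ x, qb x = dotProduct x (Pb.mulVec x) + 2 * dotProduct bb x + cb)
    (hslater : ∃ xbar, qa xbar < 0) :
    (∀ x, qa x ≤ 0 → qb x ≤ 0) ↔ ∃ l : ℝ, 0 ≤ l ∧ ∀ x, 0 ≤ l * qa x - qb x := by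
  have hqa' (x) : qa x = Pa.homogenization ba ca (x, 1) := by
    rw [hqa, Matrix.homogenization_apply_mk_one]
  have hqb' (x) : qb x = Pb.homogenization bb cb (x, 1) := by
    rw [hqb, Matrix.homogenization_apply_mk_one]
  constructor
  · intro himp
    obtain ⟨xbar, hxbar⟩ := hslater
    obtain ⟨l, hl, hle⟩ := QuadraticMap.exists_nonneg_le_mul_of_neg_imp_nonpos
      ⟨(xbar, 1), hqa' xbar ▸ hxbar⟩
      (fun _ => QuadraticMap.nonpos_of_neg_of_forall_mk_one
        fun x hx => hqb' x ▸ himp x (hqa' x ▸ hx).le)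
    exact ⟨l, hl, fun x => by rw [hqa', hqb']; linarith [hle (x, 1)]⟩
  · rintro ⟨l, hl, h⟩ x hx
    nlinarith [h x, mul_nonneg hl (neg_nonneg.2 hx)]

theorem s_lemma (n : ℕ)
    (Pa Pb : Matrix (Fin n) (Fin n) ℝ) (hPa : Pa.IsSymm) (hPb : Pb.IsSymm)
    (ba bb : Fin n → ℝ) (ca cb : ℝ)
    (qa qb : (Fin n → ℝ) → ℝ)
    (hqa : ∀ x, qa x = dotProduct x (Pa.mulVec x) + 2 * dotProduct ba x + ca)
    (hqb : ∀ x, qb x = dotProduct x (Pb.mulVec x) + 2 * dotProduct bb x + cb)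
    (hslater : ∃ xbar, qa xbar < 0) :
    (∀ x, qa x ≤ 0 → qb x ≤ 0) ↔ ∃ l : ℝ, 0 ≤ l ∧ ∀ x, 0 ≤ l * qa x - qb x :=
  s_lemma_general n Pa Pb ba bb ca cb qa qb hqa hqb hslater
end

section
/- Suppose one-step safe learning fails in the following sense: there exist linearly independent points x₁,…,x_m ∈ ℝⁿ forming a basis of span(S¹_m), where S¹_m := {x ∈ S | Ax ∈ S for all A ∈ U_m}, and U_m := {A ∈ U₀ | A x_j = A⋆ x_j, j=1,…,m} is not a singleton. Then for any finite sequence x̃₁,…,x̃_{m̃} satisfying the one-step safety condition (x̃_{k+1} ∈ S̃¹_k := {x ∈ S | Ax ∈ S for all A ∈ Ũ_k}, where Ũ_k := {A ∈ U₀ | A x̃_j = A⋆ x̃_j, j ≤ k}), the final uncertainty set Ũ_{m̃} contains U_m and hence is not a singleton. -/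
theorem safe_learning_impossible (n m mt : ℕ)
    (S : Set (Fin n → ℝ)) (U₀ : Set (Matrix (Fin n) (Fin n) ℝ))
    (Astar : Matrix (Fin n) (Fin n) ℝ) (hAstar : Astar ∈ U₀)
    (x : Fin m → (Fin n → ℝ)) (hind : LinearIndependent ℝ x)
    (Um : Set (Matrix (Fin n) (Fin n) ℝ))
    (hUm : Um = {A ∈ U₀ | ∀ j, A.mulVec (x j) = Astar.mulVec (x j)})
    (S1m : Set (Fin n → ℝ))
    (hS1m : S1m = {z ∈ S | ∀ A ∈ Um, A.mulVec z ∈ S})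
    (hxmem : ∀ j, x j ∈ S1m)
    (hbasis : Submodule.span ℝ (Set.range x) = Submodule.span ℝ S1m)
    (hnotsingleton : ¬∃ A₀, Um = {A₀})
    (xt : Fin mt → (Fin n → ℝ))
    (hsafe : ∀ k : Fin mt, xt k ∈ S ∧
      ∀ A ∈ U₀, (∀ j : Fin mt, j < k → A.mulVec (xt j) = Astar.mulVec (xt j)) →
        A.mulVec (xt k) ∈ S) :
    Um ⊆ {A ∈ U₀ | ∀ j, A.mulVec (xt j) = Astar.mulVec (xt j)} ∧
      ¬∃ A₀, {A ∈ U₀ | ∀ j, A.mulVec (xt j) = Astar.mulVec (xt j)} = {A₀} := by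
  have key : ∀ N : ℕ, ∀ k : Fin mt, (k : ℕ) < N → ∀ A ∈ Um,
      A.mulVec (xt k) = Astar.mulVec (xt k) := by
    intro N
    induction N with
    | zero => intro k hk; omega
    | succ N ih =>
      intro k hk A hA
      -- xt k ∈ S1m
      have hmem : xt k ∈ S1m := by
        rw [hS1m]
        refine ⟨(hsafe k).1, ?_⟩
        intro B hB
        have hBU₀ : B ∈ U₀ := by rw [hUm] at hB; exact hB.1
        exact (hsafe k).2 B hBU₀ (fun j hj => ih j (by
          have : (j : ℕ) < (k : ℕ) := hj
          omega) B hB)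
      -- xt k ∈ span of range x
      have hspan : xt k ∈ Submodule.span ℝ (Set.range x) := by
        rw [hbasis]
        exact Submodule.subset_span hmem
      have hAx : ∀ j, A.mulVec (x j) = Astar.mulVec (x j) := by
        rw [hUm] at hA; exact hA.2
      have hle : Submodule.span ℝ (Set.range x) ≤
          LinearMap.eqLocus (Matrix.mulVecLin A) (Matrix.mulVecLin Astar) := by
        rw [Submodule.span_le]
        rintro v ⟨j, rfl⟩
        simpa [LinearMap.eqLocus, Matrix.mulVecLin_apply] using hAx j
      have := hle hspan
      simpa [LinearMap.eqLocus, Matrix.mulVecLin_apply] using this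
  have hsub : Um ⊆ {A ∈ U₀ | ∀ j, A.mulVec (xt j) = Astar.mulVec (xt j)} := by
    intro A hA
    have hAU₀ : A ∈ U₀ := by rw [hUm] at hA; exact hA.1
    exact ⟨hAU₀, fun j => key mt j j.isLt A hA⟩
  refine ⟨hsub, ?_⟩
  rintro ⟨A₀, hA₀⟩
  apply hnotsingleton
  refine ⟨A₀, ?_⟩
  have hAstarUm : Astar ∈ Um := by rw [hUm]; exact ⟨hAstar, fun j => rfl⟩
  have hUmsub : Um ⊆ {A₀} := hA₀ ▸ hsub
  apply Set.eq_singleton_iff_unique_mem.2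
  refine ⟨?_, fun y hy => hUmsub hy⟩
  have : Astar ∈ ({A₀} : Set _) := hUmsub hAstarUm
  rw [Set.mem_singleton_iff] at this
  rw [← this]
  exact hAstarUm
end
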